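/- arXiv:2507.10837 — 3 statements merged into one kernel-verified Lean document; each statement's English description precedes it below -/
import Mathlib

section
/- For α > 1 there exist constants c1, c2 > 0 such that for all r, R ∈ (0, 1): c1 * (1 - r R)^(1 - α) ≤ (1/(2π)) ∫_0^{2π} |1 - r R e^{iθ}|^{-α} dθ ≤ c2 * (1 - r R)^(1 - α). -/
/-! With δ = 1 - ρ, the modulus |1 - ρ e^{iθ}| is comparable to δ + |θ| on [-π, π]: it is at most
δ + |θ| by the triangle inequality, and at least (δ + |θ|) / (2π + 1) because
|1 - ρ e^{iθ}|² = δ² + 2ρ(1 - cos θ) and 1 - cos θ ≥ 2θ²/π². As the integrand is symmetric about π,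
the integral is therefore bounded by a multiple of ∫_0^π (δ + θ)^{-α} dθ ≤ δ^{1-α}/(α - 1). From
below it suffices to integrate over [0, δ], where the modulus is at most 2δ. -/

open Real intervalIntegral Complex

section Kernel

variable {ρ θ : ℝ}

lemma norm_one_sub_ofReal_mul_exp_sq (ρ θ : ℝ) :
    ‖1 - (ρ : ℂ) * exp (θ * I)‖ ^ 2 = (1 - ρ) ^ 2 + 2 * ρ * (1 - Real.cos θ) := by
  rw [Complex.sq_norm, normSq_apply]
  simp only [sub_re, one_re, mul_re, ofReal_re, exp_ofReal_mul_I_re, ofReal_im,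
    exp_ofReal_mul_I_im, zero_mul, sub_zero, sub_im, one_im, mul_im, add_zero, zero_sub, mul_neg,
    neg_mul, neg_neg]
  linear_combination ρ ^ 2 * Real.sin_sq_add_cos_sq θ

lemma norm_one_sub_ofReal_mul_exp_two_pi_sub (ρ θ : ℝ) :
    ‖1 - (ρ : ℂ) * exp (↑(2 * π - θ) * I)‖ = ‖1 - (ρ : ℂ) * exp (θ * I)‖ := by
  refine (sq_eq_sq₀ (norm_nonneg _) (norm_nonneg _)).1 ?_
  rw [norm_one_sub_ofReal_mul_exp_sq, norm_one_sub_ofReal_mul_exp_sq, Real.cos_two_pi_sub]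

lemma one_sub_le_norm_one_sub_ofReal_mul_exp (hρ : 0 ≤ ρ) (θ : ℝ) :
    1 - ρ ≤ ‖1 - (ρ : ℂ) * exp (θ * I)‖ := by
  simpa [norm_exp_ofReal_mul_I, abs_of_nonneg hρ] using
    norm_sub_norm_le (1 : ℂ) (ρ * exp (θ * I))

lemma norm_one_sub_ofReal_mul_exp_le (hρ₀ : 0 ≤ ρ) (hρ₁ : ρ ≤ 1) (θ : ℝ) :
    ‖1 - (ρ : ℂ) * exp (θ * I)‖ ≤ 1 - ρ + |θ| := by
  have hsplit : 1 - (ρ : ℂ) * exp (θ * I) = ↑(1 - ρ) - ρ * (exp (I * θ) - 1) := by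
    push_cast; ring_nf
  calc ‖1 - (ρ : ℂ) * exp (θ * I)‖ ≤ (1 - ρ) + ρ * |θ| := by
        rw [hsplit]
        refine (norm_sub_le _ _).trans (add_le_add ?_ ?_)
        · rw [norm_real, Real.norm_of_nonneg (by linarith)]
        · rw [norm_mul, norm_real, Real.norm_of_nonneg hρ₀]
          exact mul_le_mul_of_nonneg_left norm_exp_I_mul_ofReal_sub_one_le hρ₀
    _ ≤ 1 - ρ + |θ| := by nlinarith [abs_nonneg θ]

lemma one_sub_add_abs_le_norm_one_sub_ofReal_mul_exp (hρ₀ : 0 ≤ ρ) (hρ₁ : ρ ≤ 1)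
    (hθ : |θ| ≤ π) :
    1 - ρ + |θ| ≤ (2 * π + 1) * ‖1 - (ρ : ℂ) * exp (θ * I)‖ := by
  have hδ := one_sub_le_norm_one_sub_ofReal_mul_exp hρ₀ θ
  rcases lt_or_ge ρ (1 / 2) with hρ | hρ
  · -- here 1 - ρ > 1/2, so 1 - ρ alone dominates 1 - ρ + |θ| ≤ 1 - ρ + π
    nlinarith [pi_pos]
  · have hcos := cos_le_one_sub_mul_cos_sq hθ
    have hsq := norm_one_sub_ofReal_mul_exp_sq ρ θ
    have key : 1 - ρ + |θ| ≤ π * ‖1 - (ρ : ℂ) * exp (θ * I)‖ := by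
      refine (pow_le_pow_iff_left₀ (by positivity) (by positivity) two_ne_zero).1 ?_
      have hπ : 2 ≤ π ^ 2 := by nlinarith [pi_gt_three]
      rw [mul_pow, hsq]
      field_simp at hcos
      nlinarith [sq_abs θ, sq_nonneg (1 - ρ - |θ|)]
    nlinarith [pi_pos, norm_nonneg (1 - (ρ : ℂ) * exp (θ * I))]

end Kernel

lemma integral_zero_two_mul_eq_two_nsmul_of_reflect {E : Type*} [NormedAddCommGroup E]
    [NormedSpace ℝ E] {f : ℝ → E} {T : ℝ} (hf : ∀ x, f (2 * T - x) = f x)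
    (hi : IntervalIntegrable f MeasureTheory.volume 0 (2 * T)) :
    ∫ x in 0..2 * T, f x = 2 • ∫ x in 0..T, f x := by
  have hsub : ∀ a b, a ∈ Set.uIcc 0 (2 * T) → b ∈ Set.uIcc 0 (2 * T) →
      IntervalIntegrable f MeasureTheory.volume a b :=
    fun a b ha hb => hi.mono_set (Set.uIcc_subset_uIcc ha hb)
  have hT : T ∈ Set.uIcc 0 (2 * T) := by
    rcases le_total 0 T with h | h
    · exact Set.mem_uIcc.2 (Or.inl ⟨h, by linarith⟩)
    · exact Set.mem_uIcc.2 (Or.inr ⟨by linarith, h⟩)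
  have hsecond : ∫ x in T..2 * T, f x = ∫ x in 0..T, f x := by
    simpa [hf, show 2 * T - T = T by ring] using
      integral_comp_sub_left (a := T) (b := 2 * T) f (2 * T)
  rw [← integral_add_adjacent_intervals (hsub 0 T Set.left_mem_uIcc hT)
    (hsub T (2 * T) hT Set.right_mem_uIcc), hsecond, two_nsmul]

lemma integral_add_rpow_neg_le {δ α T : ℝ} (hδ : 0 < δ) (hT : 0 ≤ T) (hα : 1 < α) :
    ∫ θ in 0..T, (δ + θ) ^ (-α) ≤ δ ^ (1 - α) / (α - 1) := by
  rw [integral_comp_add_left (fun x => x ^ (-α)), add_zero,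
    integral_rpow (Or.inr ⟨by linarith, Set.notMem_uIcc_of_lt hδ (by linarith)⟩),
    show -α + 1 = -(α - 1) by ring, div_neg, ← neg_div, neg_sub, show -(α - 1) = 1 - α by ring]
  gcongr
  exact sub_le_self _ (by positivity)

section Integral

variable {ρ α : ℝ}

lemma continuous_rpow_norm_one_sub_ofReal_mul_exp (hρ₀ : 0 ≤ ρ) (hρ₁ : ρ < 1) (s : ℝ) :
    Continuous fun θ : ℝ => ‖1 - (ρ : ℂ) * exp (θ * I)‖ ^ s :=
  Continuous.rpow_const (by fun_prop) fun θ =>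
    Or.inl (by linarith [one_sub_le_norm_one_sub_ofReal_mul_exp hρ₀ θ])

lemma rpow_neg_norm_one_sub_ofReal_mul_exp_le (hα : 0 ≤ α) (hρ₀ : 0 ≤ ρ) (hρ₁ : ρ < 1)
    {θ : ℝ} (hθ : |θ| ≤ π) :
    ‖1 - (ρ : ℂ) * exp (θ * I)‖ ^ (-α) ≤ (2 * π + 1) ^ α * (1 - ρ + |θ|) ^ (-α) := by
  have hC : 0 < 2 * π + 1 := by positivity
  have hx : 0 < 1 - ρ + |θ| := by positivity
  calc ‖1 - (ρ : ℂ) * exp (θ * I)‖ ^ (-α) ≤ ((1 - ρ + |θ|) / (2 * π + 1)) ^ (-α) := by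
        refine rpow_le_rpow_of_nonpos (by positivity) ?_ (by linarith)
        rw [div_le_iff₀' hC]
        exact one_sub_add_abs_le_norm_one_sub_ofReal_mul_exp hρ₀ hρ₁.le hθ
    _ = (2 * π + 1) ^ α * (1 - ρ + |θ|) ^ (-α) := by
        rw [div_rpow hx.le hC.le, rpow_neg hC.le, div_inv_eq_mul, mul_comm]

lemma two_rpow_neg_mul_le_integral_rpow_neg_norm (hα : 0 ≤ α) (hρ₀ : 0 ≤ ρ) (hρ₁ : ρ < 1) :
    2 ^ (-α) * (1 - ρ) ^ (1 - α) ≤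
      ∫ θ in 0..2 * π, ‖1 - (ρ : ℂ) * exp (θ * I)‖ ^ (-α) := by
  have hδ : 0 < 1 - ρ := by linarith
  have hf := continuous_rpow_norm_one_sub_ofReal_mul_exp hρ₀ hρ₁ (-α)
  calc 2 ^ (-α) * (1 - ρ) ^ (1 - α) = ∫ _ in 0..1 - ρ, (2 * (1 - ρ)) ^ (-α) := by
        rw [integral_const, smul_eq_mul, sub_zero, mul_rpow zero_le_two hδ.le,
          show 1 - α = 1 + -α by ring, rpow_add hδ, rpow_one]
        ring
    _ ≤ ∫ θ in 0..1 - ρ, ‖1 - (ρ : ℂ) * exp (θ * I)‖ ^ (-α) := by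
        refine integral_mono_on hδ.le intervalIntegrable_const (hf.intervalIntegrable _ _)
          fun θ hθ => rpow_le_rpow_of_nonpos (by linarith
            [one_sub_le_norm_one_sub_ofReal_mul_exp hρ₀ θ]) ?_ (by linarith)
        have := norm_one_sub_ofReal_mul_exp_le hρ₀ hρ₁.le θ
        rw [abs_of_nonneg hθ.1] at this
        linarith [hθ.2]
    _ ≤ ∫ θ in 0..2 * π, ‖1 - (ρ : ℂ) * exp (θ * I)‖ ^ (-α) :=
        integral_mono_interval le_rfl hδ.le (by linarith [pi_gt_three])
          (Filter.Eventually.of_forall fun _ => by positivity) (hf.intervalIntegrable _ _)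

lemma integral_rpow_neg_norm_le (hα : 1 < α) (hρ₀ : 0 ≤ ρ) (hρ₁ : ρ < 1) :
    ∫ θ in 0..2 * π, ‖1 - (ρ : ℂ) * exp (θ * I)‖ ^ (-α) ≤
      2 * (2 * π + 1) ^ α / (α - 1) * (1 - ρ) ^ (1 - α) := by
  have hδ : 0 < 1 - ρ := by linarith
  have hf := continuous_rpow_norm_one_sub_ofReal_mul_exp hρ₀ hρ₁ (-α)
  have hg : IntervalIntegrable (fun θ : ℝ => (2 * π + 1) ^ α * (1 - ρ + θ) ^ (-α))
      MeasureTheory.volume 0 π := by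
    refine ContinuousOn.intervalIntegrable fun θ hθ => ?_
    rw [Set.uIcc_of_le pi_pos.le] at hθ
    exact (continuousAt_const.mul ((continuousAt_const.add continuousAt_id).rpow_const
      (Or.inl (by simp only [Pi.add_apply, id_eq]; linarith [hθ.1])))).continuousWithinAt
  rw [integral_zero_two_mul_eq_two_nsmul_of_reflect
    (fun θ => by simp only [norm_one_sub_ofReal_mul_exp_two_pi_sub]) (hf.intervalIntegrable _ _),
    nsmul_eq_mul, Nat.cast_ofNat]
  calc 2 * ∫ θ in 0..π, ‖1 - (ρ : ℂ) * exp (θ * I)‖ ^ (-α)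
      ≤ 2 * ∫ θ in 0..π, (2 * π + 1) ^ α * (1 - ρ + θ) ^ (-α) := by
        gcongr
        refine integral_mono_on pi_pos.le (hf.intervalIntegrable _ _) hg fun θ hθ => ?_
        have hθπ : |θ| ≤ π := by rw [abs_of_nonneg hθ.1]; exact hθ.2
        simpa only [abs_of_nonneg hθ.1] using
          rpow_neg_norm_one_sub_ofReal_mul_exp_le (by linarith) hρ₀ hρ₁ hθπ
    _ ≤ 2 * ((2 * π + 1) ^ α * ((1 - ρ) ^ (1 - α) / (α - 1))) := by
        rw [integral_const_mul]
        gcongr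
        exact integral_add_rpow_neg_le hδ pi_pos.le hα
    _ = 2 * (2 * π + 1) ^ α / (α - 1) * (1 - ρ) ^ (1 - α) := by ring

end Integral

/-- One-dimensional Forelli–Rudin estimate over the unit circle. -/
theorem forelli_rudin_circle (α : ℝ) (hα : 1 < α) :
    ∃ c1 c2 : ℝ, 0 < c1 ∧ 0 < c2 ∧
      ∀ r ∈ Set.Ioo (0 : ℝ) 1, ∀ R ∈ Set.Ioo (0 : ℝ) 1,
        c1 * (1 - r * R) ^ (1 - α) ≤
          ((2 * Real.pi)⁻¹ * ∫ θ in (0 : ℝ)..(2 * Real.pi),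
            ‖1 - (r : ℂ) * (R : ℂ) * Complex.exp (θ * Complex.I)‖ ^ (-α)) ∧
        ((2 * Real.pi)⁻¹ * ∫ θ in (0 : ℝ)..(2 * Real.pi),
            ‖1 - (r : ℂ) * (R : ℂ) * Complex.exp (θ * Complex.I)‖ ^ (-α)) ≤
          c2 * (1 - r * R) ^ (1 - α) := by
  have hα₀ : 0 < α - 1 := sub_pos.2 hα
  refine ⟨(2 * π)⁻¹ * 2 ^ (-α), (2 * π)⁻¹ * (2 * (2 * π + 1) ^ α / (α - 1)),
    by positivity, by positivity, fun r ⟨hr₀, hr₁⟩ R ⟨hR₀, hR₁⟩ => ?_⟩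
  have hρ₀ : 0 ≤ r * R := by positivity
  have hρ₁ : r * R < 1 := by nlinarith
  rw [← ofReal_mul, mul_assoc, mul_assoc]
  exact ⟨mul_le_mul_of_nonneg_left
      (two_rpow_neg_mul_le_integral_rpow_neg_norm (by linarith) hρ₀ hρ₁) (by positivity),
    mul_le_mul_of_nonneg_left (integral_rpow_neg_norm_le hα hρ₀ hρ₁) (by positivity)⟩
end

section
/- Let f be analytic on the unit disk D and 1 < s < ∞. There is a constant c > 0 (independent of f and R) such that for all R ∈ (0,1): M_s(f, R^2) ≤ c (1 - R)^{1/s - 1} M_1(f, R). -/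
/-!
By the Cauchy formula on the circle of radius `R`, `|f(R² e^{iθ})|` is at most the integral of
`|f(R e^{it})| dt / 2π` against the kernel `|e^{it} - R e^{iθ}|⁻¹`. Hölder's inequality for the
measure `|f(R e^{it})| dt` followed by Tonelli bounds the `s`-th power mean on the circle of radius
`R²` by `M_1(f, R)^s` times the largest `L^s` norm of the kernel in `θ`. Since
`|e^{iφ} - R| ≥ (1 - R + |φ|) / 2π` for `|φ| ≤ π`, that norm is `O((1 - R)^{1/s - 1})`.
-/

/-- The `p`-th integral mean of `f` on the circle of radius `r`. -/
noncomputable def Mp (p : ℝ) (f : ℂ → ℂ) (r : ℝ) : ℝ :=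
  ((2 * Real.pi)⁻¹ * ∫ θ in (0 : ℝ)..(2 * Real.pi),
    ‖f ((r : ℂ) * Complex.exp (θ * Complex.I))‖ ^ p) ^ (1 / p)

open MeasureTheory Real Function
open scoped ENNReal

theorem two_div_pi_mul_abs_le_norm_exp_mul_I_sub_one {φ : ℝ} (hφ : |φ| ≤ π) :
    2 / π * |φ| ≤ ‖Complex.exp (φ * Complex.I) - 1‖ := by
  have hsin := mul_abs_le_abs_sin (x := φ / 2) (by rw [abs_div, abs_two]; linarith)
  rw [abs_div, abs_two] at hsin
  rw [mul_comm, mul_comm (φ : ℂ), Complex.norm_exp_I_mul_ofReal_sub_one, norm_mul,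
    Real.norm_eq_abs, Real.norm_eq_abs, abs_two]
  linarith

theorem one_sub_le_norm_exp_mul_I_sub_ofReal {R : ℝ} (hR : 0 ≤ R) (φ : ℝ) :
    1 - R ≤ ‖Complex.exp (φ * Complex.I) - R‖ := by
  have := norm_sub_norm_le (Complex.exp (φ * Complex.I)) (R : ℂ)
  rwa [Complex.norm_exp_ofReal_mul_I, Complex.norm_real, Real.norm_eq_abs,
    abs_of_nonneg hR] at this

-- `|e^{iφ} - R|` dominates both `1 - R` and, by Jordan's inequality, `|φ| / π`.
theorem le_norm_exp_mul_I_sub_ofReal {R φ : ℝ} (hR0 : 0 ≤ R) (hR1 : R ≤ 1) (hφ : |φ| ≤ π) :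
    (1 - R + |φ|) / (2 * π) ≤ ‖Complex.exp (φ * Complex.I) - R‖ := by
  set e := Complex.exp (φ * Complex.I)
  have hR1' : ‖(R : ℂ) - 1‖ = 1 - R := by
    rw [← Complex.ofReal_one, ← Complex.ofReal_sub, Complex.norm_real, Real.norm_eq_abs,
      abs_of_nonpos (by linarith), neg_sub]
  have hfar := one_sub_le_norm_exp_mul_I_sub_ofReal hR0 φ
  have hchord : ‖e - 1‖ ≤ ‖e - R‖ + (1 - R) := by
    simpa only [hR1'] using norm_sub_le_norm_sub_add_norm_sub e (R : ℂ) 1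
  have hjordan := two_div_pi_mul_abs_le_norm_exp_mul_I_sub_one hφ
  rw [div_mul_eq_mul_div, div_le_iff₀ pi_pos] at hjordan
  rw [div_le_iff₀ two_pi_pos]
  nlinarith [abs_nonneg φ, pi_gt_three]

theorem rpow_inv_norm_exp_mul_I_sub_ofReal_le {R s φ : ℝ} (hR0 : 0 ≤ R) (hR1 : R < 1)
    (hs : 0 ≤ s) (hφ : |φ| ≤ π) :
    ‖Complex.exp (φ * Complex.I) - R‖⁻¹ ^ s ≤ (2 * π) ^ s * (1 - R + |φ|) ^ (-s) := by
  have hD : 0 < 1 - R + |φ| := by linarith [abs_nonneg φ]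
  calc ‖Complex.exp (φ * Complex.I) - R‖⁻¹ ^ s ≤ ((1 - R + |φ|) / (2 * π))⁻¹ ^ s := by
        gcongr
        exact le_norm_exp_mul_I_sub_ofReal hR0 hR1.le hφ
    _ = (2 * π) ^ s * (1 - R + |φ|) ^ (-s) := by
        rw [inv_div, div_rpow (by positivity) hD.le, rpow_neg hD.le, div_eq_mul_inv]

theorem norm_exp_mul_I_sub_mul_exp_mul_I (R t θ : ℝ) :
    ‖Complex.exp (t * Complex.I) - R * Complex.exp (θ * Complex.I)‖
      = ‖Complex.exp ((t - θ : ℝ) * Complex.I) - R‖ := by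
  have : Complex.exp (t * Complex.I) - R * Complex.exp (θ * Complex.I)
      = Complex.exp (θ * Complex.I) * (Complex.exp ((t - θ : ℝ) * Complex.I) - R) := by
    rw [mul_sub, ← Complex.exp_add]; push_cast; ring_nf
  rw [this, norm_mul, Complex.norm_exp_ofReal_mul_I, one_mul]

theorem integral_add_rpow_neg_le_s5 {A b s : ℝ} (hA : 0 < A) (hb : 0 ≤ b) (hs : 1 < s) :
    ∫ φ in 0..b, (A + φ) ^ (-s) ≤ A ^ (1 - s) / (s - 1) := by
  have h0 : (0 : ℝ) ∉ Set.uIcc A (A + b) := by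
    rw [Set.uIcc_of_le (by linarith)]; exact fun h => by linarith [h.1]
  rw [intervalIntegral.integral_comp_add_left (fun x => x ^ (-s)), add_zero,
    integral_rpow (.inr ⟨by linarith, h0⟩), show -s + 1 = 1 - s by ring, ← neg_div_neg_eq,
    neg_sub, neg_sub]
  have : 0 ≤ (A + b) ^ (1 - s) := rpow_nonneg (by linarith) _
  gcongr
  linarith

theorem continuous_inv_norm_exp_mul_I_sub_ofReal_rpow {R s : ℝ} (hR0 : 0 ≤ R) (hR1 : R < 1)
    (hs : 0 ≤ s) : Continuous fun φ : ℝ => ‖Complex.exp (φ * Complex.I) - R‖⁻¹ ^ s :=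
  ((by fun_prop : Continuous fun φ : ℝ => ‖Complex.exp (φ * Complex.I) - R‖).inv₀
    fun φ => by linarith [one_sub_le_norm_exp_mul_I_sub_ofReal hR0 φ]).rpow_const fun _ => .inr hs

theorem integral_zero_pi_inv_norm_exp_mul_I_sub_ofReal_rpow_le {R s : ℝ} (hR0 : 0 ≤ R)
    (hR1 : R < 1) (hs : 1 < s) :
    ∫ φ in 0..π, ‖Complex.exp (φ * Complex.I) - R‖⁻¹ ^ s
      ≤ (2 * π) ^ s * ((1 - R) ^ (1 - s) / (s - 1)) := by
  have hbound_int :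
      IntervalIntegrable (fun φ => (2 * π) ^ s * (1 - R + φ) ^ (-s)) volume 0 π := by
    refine ContinuousOn.intervalIntegrable (continuousOn_const.mul
      (ContinuousOn.rpow_const (by fun_prop) fun φ hφ => .inl ?_))
    rw [Set.uIcc_of_le pi_pos.le] at hφ
    linarith [hφ.1]
  calc ∫ φ in 0..π, ‖Complex.exp (φ * Complex.I) - R‖⁻¹ ^ s
      ≤ ∫ φ in 0..π, (2 * π) ^ s * (1 - R + φ) ^ (-s) := by
        refine intervalIntegral.integral_mono_on pi_pos.le
          ((continuous_inv_norm_exp_mul_I_sub_ofReal_rpow hR0 hR1 (by linarith)).intervalIntegrable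
            _ _) hbound_int fun φ hφ => ?_
        simpa only [abs_of_nonneg hφ.1] using rpow_inv_norm_exp_mul_I_sub_ofReal_le hR0 hR1
          (by linarith) (φ := φ) (by rw [abs_of_nonneg hφ.1]; exact hφ.2)
    _ ≤ (2 * π) ^ s * ((1 - R) ^ (1 - s) / (s - 1)) := by
        rw [intervalIntegral.integral_const_mul]
        gcongr
        exact integral_add_rpow_neg_le_s5 (by linarith) pi_pos.le hs

theorem integral_inv_norm_exp_mul_I_sub_mul_rpow_le {R s : ℝ} (hR0 : 0 ≤ R) (hR1 : R < 1)
    (hs : 1 < s) (t : ℝ) :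
    ∫ θ in 0..2 * π, ‖Complex.exp (t * Complex.I) - R * Complex.exp (θ * Complex.I)‖⁻¹ ^ s
      ≤ 2 * (2 * π) ^ s / (s - 1) * (1 - R) ^ (1 - s) := by
  set F : ℝ → ℝ := fun φ => ‖Complex.exp (φ * Complex.I) - R‖⁻¹ ^ s
  have hF_cont : Continuous F := continuous_inv_norm_exp_mul_I_sub_ofReal_rpow hR0 hR1 (by linarith)
  have hF_periodic : Periodic F (2 * π) := fun φ => by
    simp only [F, Complex.ofReal_add, Complex.ofReal_mul, Complex.ofReal_ofNat,
      Complex.exp_mul_I_periodic (φ : ℂ)]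
  have hF_even (φ : ℝ) : F (-φ) = F φ := by
    have : Complex.exp ((-φ : ℝ) * Complex.I) - R
        = (starRingEnd ℂ) (Complex.exp (φ * Complex.I) - R) := by
      rw [map_sub, ← Complex.exp_conj, map_mul, Complex.conj_ofReal, Complex.conj_ofReal,
        Complex.conj_I]
      push_cast; ring_nf
    simp only [F, this, Complex.norm_conj]
  have hrot (θ : ℝ) : ‖Complex.exp (t * Complex.I) - R * Complex.exp (θ * Complex.I)‖⁻¹ ^ s
      = F (t - θ) := by simp only [F, norm_exp_mul_I_sub_mul_exp_mul_I]
  calc ∫ θ in 0..2 * π, ‖Complex.exp (t * Complex.I) - R * Complex.exp (θ * Complex.I)‖⁻¹ ^ s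
      = ∫ φ in -π..-π + 2 * π, F φ := by
        simp_rw [hrot, intervalIntegral.integral_comp_sub_left F t, sub_zero]
        rw [← hF_periodic.intervalIntegral_add_eq (t - 2 * π) (-π), sub_add_cancel]
    _ = 2 * ∫ φ in 0..π, F φ := by
        rw [show -π + 2 * π = π by ring, ← intervalIntegral.integral_add_adjacent_intervals
          (b := 0) (hF_cont.intervalIntegrable _ _) (hF_cont.intervalIntegrable _ _),
          ← neg_zero, ← intervalIntegral.integral_comp_neg, neg_zero]
        simp_rw [hF_even]
        ring
    _ ≤ 2 * ((2 * π) ^ s * ((1 - R) ^ (1 - s) / (s - 1))) :=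
        mul_le_mul_of_nonneg_left
          (integral_zero_pi_inv_norm_exp_mul_I_sub_ofReal_rpow_le hR0 hR1 hs) zero_le_two
    _ = 2 * (2 * π) ^ s / (s - 1) * (1 - R) ^ (1 - s) := by ring

theorem lintegral_rpow_le_of_kernel_bound {α β : Type*} [MeasurableSpace α] [MeasurableSpace β]
    {μ : Measure α} {ν : Measure β} [SFinite μ] [SFinite ν] {s : ℝ} (hs : 1 ≤ s)
    {g : β → ℝ≥0∞} {h : α → ℝ≥0∞} {k : β → α → ℝ≥0∞} {K : ℝ≥0∞}
    (hh : Measurable h) (hk : Measurable (uncurry k))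
    (hg : ∀ θ, g θ ≤ ∫⁻ t, h t * k θ t ∂μ) (hK : ∀ t, ∫⁻ θ, k θ t ^ s ∂ν ≤ K) :
    ∫⁻ θ, g θ ^ s ∂ν ≤ K * (∫⁻ t, h t ∂μ) ^ s := by
  have hs0 : 0 < s := by linarith
  set H := ∫⁻ t, h t ∂μ
  have hF : Measurable (uncurry fun θ t => h t * k θ t ^ s) :=
    (hh.comp measurable_snd).mul (hk.pow_const s)
  have holder (θ : β) : g θ ^ s ≤ H ^ (s - 1) * ∫⁻ t, h t * k θ t ^ s ∂μ := by
    have hsplit (t : α) : h t * k θ t = h t ^ (1 - 1 / s) * (h t * k θ t ^ s) ^ (1 / s) := by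
      rw [ENNReal.mul_rpow_of_nonneg _ _ (by positivity), ← ENNReal.rpow_mul,
        mul_one_div_cancel hs0.ne', ENNReal.rpow_one, ← mul_assoc,
        ← ENNReal.rpow_add_of_nonneg _ _ (by bound) (by positivity), sub_add_cancel,
        ENNReal.rpow_one]
    calc g θ ^ s ≤ (∫⁻ t, h t * k θ t ∂μ) ^ s := ENNReal.rpow_le_rpow (hg θ) hs0.le
      _ ≤ (H ^ (1 - 1 / s) * (∫⁻ t, h t * k θ t ^ s ∂μ) ^ (1 / s)) ^ s := by
        gcongr
        simp_rw [hsplit]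
        exact ENNReal.lintegral_mul_norm_pow_le hh.aemeasurable
          (hF.of_uncurry_left (x := θ)).aemeasurable (by bound) (by positivity) (by ring)
      _ = H ^ (s - 1) * ∫⁻ t, h t * k θ t ^ s ∂μ := by
        rw [ENNReal.mul_rpow_of_nonneg _ _ hs0.le, ← ENNReal.rpow_mul, ← ENNReal.rpow_mul,
          one_div_mul_cancel hs0.ne', ENNReal.rpow_one, sub_mul, one_div_mul_cancel hs0.ne',
          one_mul]
  have hHs : H ^ (s - 1) * H = H ^ s := by
    simpa using (ENNReal.rpow_add_of_nonneg (x := H) (s - 1) 1 (by linarith) zero_le_one).symm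
  have hks : Measurable (uncurry fun θ t => k θ t ^ s) := hk.pow_const s
  calc ∫⁻ θ, g θ ^ s ∂ν ≤ ∫⁻ θ, H ^ (s - 1) * ∫⁻ t, h t * k θ t ^ s ∂μ ∂ν :=
        lintegral_mono holder
    _ = H ^ (s - 1) * ∫⁻ t, h t * ∫⁻ θ, k θ t ^ s ∂ν ∂μ := by
        rw [lintegral_const_mul _ (by exact hF.lintegral_prod_right'),
          lintegral_lintegral_swap hF.aemeasurable]
        simp_rw [lintegral_const_mul _ hks.of_uncurry_right]
    _ ≤ H ^ (s - 1) * ∫⁻ t, h t * K ∂μ := by gcongr with t; exact hK t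
    _ = K * H ^ s := by rw [lintegral_mul_const _ hh, ← mul_assoc, hHs, mul_comm]

theorem ofReal_intervalIntegral_eq_lintegral {a b : ℝ} (hab : a ≤ b) {F : ℝ → ℝ}
    (hF : Continuous F) (hF0 : ∀ t, 0 ≤ F t) :
    ENNReal.ofReal (∫ t in a..b, F t) = ∫⁻ t in Set.Ioc a b, ENNReal.ofReal (F t) := by
  rw [intervalIntegral.integral_of_le hab,
    ofReal_integral_eq_lintegral_ofReal hF.integrableOn_Ioc (.of_forall hF0)]

theorem intervalIntegral_rpow_le_of_kernel_bound {a b s K : ℝ} (hab : a ≤ b) (hs : 1 ≤ s)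
    {g h : ℝ → ℝ} {k : ℝ → ℝ → ℝ} (hg : Continuous g) (hh : Continuous h)
    (hk : Continuous (uncurry k)) (hg0 : ∀ θ, 0 ≤ g θ) (hh0 : ∀ t, 0 ≤ h t)
    (hk0 : ∀ θ t, 0 ≤ k θ t) (hgk : ∀ θ, g θ ≤ ∫ t in a..b, h t * k θ t)
    (hK : ∀ t, ∫ θ in a..b, k θ t ^ s ≤ K) :
    ∫ θ in a..b, g θ ^ s ≤ K * (∫ t in a..b, h t) ^ s := by
  have hs0 : 0 ≤ s := by linarith
  have hK0 : 0 ≤ K :=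
    (intervalIntegral.integral_nonneg hab fun θ _ => rpow_nonneg (hk0 θ 0) s).trans (hK 0)
  have hH0 : 0 ≤ ∫ t in a..b, h t := intervalIntegral.integral_nonneg hab fun t _ => hh0 t
  have hk_left (θ : ℝ) : Continuous (k θ) := hk.comp (continuous_const.prodMk continuous_id)
  have hk_right (t : ℝ) : Continuous (k · t) := hk.comp (continuous_id.prodMk continuous_const)
  have key := lintegral_rpow_le_of_kernel_bound (μ := volume.restrict (Set.Ioc a b))
    (ν := volume.restrict (Set.Ioc a b)) hs (g := fun θ => ENNReal.ofReal (g θ))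
    (h := fun t => ENNReal.ofReal (h t)) (k := fun θ t => ENNReal.ofReal (k θ t))
    (K := ENNReal.ofReal K) (ENNReal.measurable_ofReal.comp hh.measurable)
    (ENNReal.measurable_ofReal.comp hk.measurable)
    (fun θ => by
      simp_rw [← ENNReal.ofReal_mul (hh0 _)]
      rw [← ofReal_intervalIntegral_eq_lintegral (F := fun t => h t * k θ t) hab
        (hh.mul (hk_left θ)) fun t => mul_nonneg (hh0 t) (hk0 θ t)]
      exact ENNReal.ofReal_le_ofReal (hgk θ))
    (fun t => by
      simp_rw [ENNReal.ofReal_rpow_of_nonneg (hk0 _ t) hs0]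
      rw [← ofReal_intervalIntegral_eq_lintegral (F := fun θ => k θ t ^ s) hab
        ((hk_right t).rpow_const fun _ => .inr hs0) fun θ => rpow_nonneg (hk0 θ t) s]
      exact ENNReal.ofReal_le_ofReal (hK t))
  simp_rw [ENNReal.ofReal_rpow_of_nonneg (hg0 _) hs0] at key
  rw [← ofReal_intervalIntegral_eq_lintegral (F := fun θ => g θ ^ s) hab
      (hg.rpow_const fun _ => .inr hs0) fun θ => rpow_nonneg (hg0 θ) s,
    ← ofReal_intervalIntegral_eq_lintegral hab hh hh0, ENNReal.ofReal_rpow_of_nonneg hH0 hs0,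
    ← ENNReal.ofReal_mul hK0] at key
  exact (ENNReal.ofReal_le_ofReal_iff (by positivity)).1 key

theorem circleIntegral.norm_integral_le_integral_norm {E : Type*} [NormedAddCommGroup E]
    [NormedSpace ℂ E] (f : ℂ → E) (c : ℂ) (R : ℝ) :
    ‖∮ z in C(c, R), f z‖ ≤ ∫ θ in 0..2 * π, |R| * ‖f (circleMap c R θ)‖ := by
  refine (intervalIntegral.norm_integral_le_integral_norm two_pi_pos.le).trans_eq ?_
  simp [norm_smul]

theorem DiffContOnCl.norm_le_integral_norm_div {E : Type*} [NormedAddCommGroup E]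
    [NormedSpace ℂ E] [CompleteSpace E] {f : ℂ → E} {c z : ℂ} {R : ℝ}
    (hf : DiffContOnCl ℂ f (Metric.ball c R)) (hz : z ∈ Metric.ball c R) :
    ‖f z‖ ≤ (2 * π)⁻¹ * ∫ θ in 0..2 * π, R * ‖f (circleMap c R θ)‖ / ‖circleMap c R θ - z‖ := by
  have hR : 0 < R := Metric.pos_of_mem_ball hz
  have h2πI : ‖(2 * π * Complex.I : ℂ)⁻¹‖ = (2 * π)⁻¹ := by simp [pi_pos.le]
  rw [← hf.two_pi_i_inv_smul_circleIntegral_sub_inv_smul hz, norm_smul, h2πI]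
  gcongr
  refine (circleIntegral.norm_integral_le_integral_norm _ c R).trans_eq
    (intervalIntegral.integral_congr fun θ _ => ?_)
  simp only [norm_smul, norm_inv, abs_of_pos hR]
  ring

section Disk

variable {E : Type*} [NormedAddCommGroup E] [NormedSpace ℂ E] [CompleteSpace E] {f : ℂ → E}
  {R : ℝ}

theorem DiffContOnCl.norm_circleMap_sq_le_integral (hf : DiffContOnCl ℂ f (Metric.ball 0 R))
    (hR0 : 0 < R) (hR1 : R < 1) (θ : ℝ) :
    ‖f (circleMap 0 (R ^ 2) θ)‖ ≤ ∫ t in 0..2 * π, (2 * π)⁻¹ * ‖f (circleMap 0 R t)‖ *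
      ‖Complex.exp (t * Complex.I) - R * Complex.exp (θ * Complex.I)‖⁻¹ := by
  have hz : circleMap 0 (R ^ 2) θ ∈ Metric.ball (0 : ℂ) R := by
    rw [Metric.mem_ball, dist_zero_right, norm_circleMap_zero, abs_of_nonneg (by positivity)]
    nlinarith
  refine (hf.norm_le_integral_norm_div hz).trans_eq ?_
  rw [← intervalIntegral.integral_const_mul]
  refine intervalIntegral.integral_congr fun t _ => ?_
  have : circleMap 0 R t - circleMap 0 (R ^ 2) θ
      = R * (Complex.exp (t * Complex.I) - R * Complex.exp (θ * Complex.I)) := by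
    simp only [circleMap_zero]; push_cast; ring
  simp only [this, norm_mul, Complex.norm_real, Real.norm_eq_abs, abs_of_pos hR0]
  field_simp

theorem DiffContOnCl.integral_norm_circleMap_sq_rpow_le
    (hf : DiffContOnCl ℂ f (Metric.ball 0 R)) (hR0 : 0 < R) (hR1 : R < 1) {s : ℝ} (hs : 1 < s) :
    ∫ θ in 0..2 * π, ‖f (circleMap 0 (R ^ 2) θ)‖ ^ s ≤ 2 * (2 * π) ^ s / (s - 1) *
      (1 - R) ^ (1 - s) * (∫ t in 0..2 * π, (2 * π)⁻¹ * ‖f (circleMap 0 R t)‖) ^ s := by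
  have hf_circle {r : ℝ} (hr0 : 0 ≤ r) (hr : r ≤ R) : Continuous fun t => f (circleMap 0 r t) :=
    hf.continuousOn.comp_continuous (continuous_circleMap 0 r) fun t => by
      rwa [closure_ball _ hR0.ne', Metric.mem_closedBall, dist_zero_right, norm_circleMap_zero,
        abs_of_nonneg hr0]
  have hk_pos (θ t : ℝ) :
      0 < ‖Complex.exp (t * Complex.I) - R * Complex.exp (θ * Complex.I)‖ := by
    rw [norm_exp_mul_I_sub_mul_exp_mul_I]
    linarith [one_sub_le_norm_exp_mul_I_sub_ofReal hR0.le (t - θ)]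
  exact intervalIntegral_rpow_le_of_kernel_bound
    (k := fun θ t => ‖Complex.exp (t * Complex.I) - R * Complex.exp (θ * Complex.I)‖⁻¹)
    two_pi_pos.le hs.le (hf_circle (by positivity) (by nlinarith)).norm
    (continuous_const.mul (hf_circle hR0.le le_rfl).norm)
    (by fun_prop (disch := exact fun p => (hk_pos _ _).ne')) (fun θ => norm_nonneg _)
    (fun t => by positivity) (fun θ t => inv_nonneg.2 (hk_pos θ t).le)
    (hf.norm_circleMap_sq_le_integral hR0 hR1)
    (integral_inv_norm_exp_mul_I_sub_mul_rpow_le hR0.le hR1 hs)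

end Disk

theorem Mp_eq_circleMap (p : ℝ) (f : ℂ → ℂ) (r : ℝ) :
    Mp p f r = ((2 * π)⁻¹ * ∫ θ in 0..2 * π, ‖f (circleMap 0 r θ)‖ ^ p) ^ (1 / p) := by
  simp only [Mp, circleMap_zero]

theorem Mp_nonneg (p : ℝ) (f : ℂ → ℂ) (r : ℝ) : 0 ≤ Mp p f r :=
  rpow_nonneg (mul_nonneg (by positivity)
    (intervalIntegral.integral_nonneg two_pi_pos.le fun _ _ => rpow_nonneg (norm_nonneg _) p)) _

/-- Lemma A (second estimate), dimension one: `M_s(f, R²) ≤ c (1-R)^{1/s-1} M_1(f, R)`. -/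
theorem Ms_from_M1_estimate (s : ℝ) (hs : 1 < s) :
    ∃ c : ℝ, 0 < c ∧ ∀ f : ℂ → ℂ, AnalyticOn ℂ f (Metric.ball 0 1) →
      ∀ R ∈ Set.Ioo (0 : ℝ) 1,
        Mp s f (R ^ 2) ≤ c * (1 - R) ^ (1 / s - 1) * Mp 1 f R := by
  set C := (2 * π)⁻¹ * (2 * (2 * π) ^ s / (s - 1))
  have hs1 : 0 < s - 1 := by linarith
  have hC : 0 < C := by positivity
  refine ⟨C ^ s⁻¹, by positivity, fun f hf R ⟨hR0, hR1⟩ => ?_⟩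
  have hdisk : DiffContOnCl ℂ f (Metric.ball 0 R) :=
    hf.differentiableOn.diffContOnCl_ball (Metric.closedBall_subset_ball hR1)
  have hM1 : Mp 1 f R = ∫ t in 0..2 * π, (2 * π)⁻¹ * ‖f (circleMap 0 R t)‖ := by
    simp only [Mp_eq_circleMap, rpow_one, div_one, intervalIntegral.integral_const_mul]
  have hM1_nonneg := Mp_nonneg 1 f R
  calc Mp s f (R ^ 2)
      = ((2 * π)⁻¹ * ∫ θ in 0..2 * π, ‖f (circleMap 0 (R ^ 2) θ)‖ ^ s) ^ (1 / s) :=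
        Mp_eq_circleMap _ _ _
    _ ≤ ((2 * π)⁻¹ * (2 * (2 * π) ^ s / (s - 1) * (1 - R) ^ (1 - s) * Mp 1 f R ^ s)) ^ (1 / s) := by
        rw [hM1]
        gcongr
        · exact mul_nonneg (by positivity)
            (intervalIntegral.integral_nonneg two_pi_pos.le fun θ _ => by positivity)
        · exact hdisk.integral_norm_circleMap_sq_rpow_le hR0 hR1 hs
    _ = (C * (1 - R) ^ (1 - s) * Mp 1 f R ^ s) ^ (1 / s) := by congr 1; ring
    _ = C ^ s⁻¹ * (1 - R) ^ (1 / s - 1) * Mp 1 f R := by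
        rw [mul_rpow (by positivity) (by positivity), mul_rpow hC.le (by bound), ← rpow_mul (by bound),
          ← rpow_mul hM1_nonneg, show (1 - s) * (1 / s) = 1 / s - 1 by field_simp,
          mul_one_div_cancel (by positivity), rpow_one, one_div]
end

section
/- Let 0 < p ≤ s < ∞, α > 0, and let f be analytic in the unit disk D. Then there is a constant c > 0 independent of f such that (∫_D |f(w)|^s (1 - |w|)^{s(α + 1/p) - 2} dA(w))^{1/s} ≤ c (∫_0^{2π} (∫_0^1 |f(r e^{iθ})|^p (1 - r)^{αp - 1} dr)^{1} dθ/(2π))^{1/p}, i.e. the A^s Bergman-type norm with weight (1-|w|)^{s(α+1/p)-2} is dominated by the F^{p,p}_α norm. -/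
/-!
Put `1 - ‖w‖ = 2δ`. On the disc `B(w, δ)` the weight `1 - ‖v‖` is comparable to `δ`, so the
sub-mean-value property of `|f|^p` (the area mean value inequality, combined with Hölder for
`p ≥ 1` and with an absorption argument over concentric discs for `p < 1`) gives
`|f(w)|^p (1 - ‖w‖)^(αp+1) ≲ A := ∫_D |f|^p (1 - ‖v‖)^(αp-1) dA`. The integrand on the left is
`(|f|^p (1 - ‖w‖)^(αp+1))^(s/p-1)` times the integrand of `A`, hence it integrates to `≲ A^(s/p)`;
finally `A` is at most the `F^{p,p}_α` integral, because the polar Jacobian `r` is at most `1`.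
-/

open MeasureTheory Metric Set Real
open scoped ENNReal

theorem lintegral_ball_eq_lintegral_polar (g : ℂ → ℝ≥0∞) (z : ℂ) (R : ℝ) :
    ∫⁻ w in ball z R, g w =
      ∫⁻ q in Ioo 0 R ×ˢ Ioo (-π) π, ENNReal.ofReal q.1 * g (circleMap z q.1 q.2) := by
  have hpolar (q : ℝ × ℝ) : z + Complex.polarCoord.symm q = circleMap z q.1 q.2 := by
    simp [circleMap, Complex.exp_mul_I]
  have hS : MeasurableSet {q : ℝ × ℝ | |q.1| < R} :=
    measurableSet_lt measurable_fst.abs measurable_const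
  have hrect : {q : ℝ × ℝ | |q.1| < R} ∩ Complex.polarCoord.target = Ioo 0 R ×ˢ Ioo (-π) π := by
    ext ⟨r, θ⟩
    simp only [Complex.polarCoord_target, mem_inter_iff, mem_ofPred_eq, mem_prod, mem_Ioi, mem_Ioo]
    constructor
    · rintro ⟨hR, hr, hθ⟩
      exact ⟨⟨hr, by rwa [abs_of_pos hr] at hR⟩, hθ⟩
    · rintro ⟨⟨hr, hR⟩, hθ⟩
      exact ⟨by rwa [abs_of_pos hr], hr, hθ⟩
  calc ∫⁻ w in ball z R, g w = ∫⁻ w, (ball z R).indicator g (z + w) := by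
        rw [lintegral_add_left_eq_self, lintegral_indicator measurableSet_ball]
    _ = ∫⁻ q in Complex.polarCoord.target,
          ENNReal.ofReal q.1 • (ball z R).indicator g (z + Complex.polarCoord.symm q) :=
        (Complex.lintegral_comp_polarCoord_symm _).symm
    _ = ∫⁻ q in Complex.polarCoord.target, {q : ℝ × ℝ | |q.1| < R}.indicator
          (fun q => ENNReal.ofReal q.1 * g (circleMap z q.1 q.2)) q := by
        congr 1 with q
        simp only [indicator, mem_ball, dist_eq_norm, hpolar, mem_ofPred_eq, smul_eq_mul]
        simp [circleMap, Complex.norm_exp_ofReal_mul_I]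
    _ = _ := by rw [setLIntegral_indicator hS, hrect]

theorem lintegral_ball_zero_one_le_lintegral_Ioc (g : ℂ → ℝ≥0∞) :
    ∫⁻ v in ball (0 : ℂ) 1, g v
      ≤ ∫⁻ θ in Ioc 0 (2 * π), ∫⁻ r in Ioc (0 : ℝ) 1, g (r * Complex.exp (θ * Complex.I)) := by
  set H : ℝ × ℝ → ℝ≥0∞ := fun q => g (q.2 * Complex.exp (q.1 * Complex.I))
  -- Polar angles lie in `(-π, π)`; the reflection `v ↦ -v` moves them to `(0, 2π)`.
  have hneg : ∫⁻ v in ball (0 : ℂ) 1, g v = ∫⁻ v in ball (0 : ℂ) 1, g (-v) := by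
    rw [← (Measure.measurePreserving_neg volume).setLIntegral_comp_preimage_emb
      (Homeomorph.neg ℂ).measurableEmbedding]
    simp
  have hshift : (fun θ : ℝ => θ + π) ⁻¹' Ioo 0 (2 * π) = Ioo (-π) π := by
    ext θ
    simp only [mem_preimage, mem_Ioo]
    constructor <;> rintro ⟨h₁, h₂⟩ <;> constructor <;> linarith
  calc ∫⁻ v in ball (0 : ℂ) 1, g v
      = ∫⁻ q in Ioo 0 1 ×ˢ Ioo (-π) π, ENNReal.ofReal q.1 * g (-circleMap 0 q.1 q.2) := by
        rw [hneg, lintegral_ball_eq_lintegral_polar (fun v => g (-v))]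
    _ ≤ ∫⁻ q in Ioo 0 1 ×ˢ Ioo (-π) π, H (q.2 + π, q.1) := by
        refine setLIntegral_mono' (measurableSet_Ioo.prod measurableSet_Ioo) ?_
        rintro ⟨r, θ⟩ ⟨hr, -⟩
        have hrot : -circleMap 0 r θ = r * Complex.exp ((θ + π : ℝ) * Complex.I) := by
          simp [circleMap, add_mul, Complex.exp_add]
        rw [hrot]
        exact mul_le_of_le_one_left bot_le (ENNReal.ofReal_le_one.2 hr.2.le)
    _ ≤ ∫⁻ θ in Ioo (-π) π, ∫⁻ r in Ioo 0 1, H (θ + π, r) := by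
        rw [Measure.volume_eq_prod, ← Measure.prod_restrict, ← lintegral_prod_swap]
        exact lintegral_prod_le _
    _ = ∫⁻ θ in Ioo 0 (2 * π), ∫⁻ r in Ioo 0 1, H (θ, r) := by
        rw [← hshift, (measurePreserving_add_right volume π).setLIntegral_comp_preimage_emb
          (measurableEmbedding_addRight π) (fun θ => ∫⁻ r in Ioo 0 1, H (θ, r))]
    _ ≤ ∫⁻ θ in Ioc 0 (2 * π), ∫⁻ r in Ioc 0 1, H (θ, r) :=
        (lintegral_mono fun θ => lintegral_mono_set Ioo_subset_Ioc_self).trans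
          (lintegral_mono_set Ioo_subset_Ioc_self)

theorem lintegral_ball_weighted_le_lintegral_Ioc (f : ℂ → ℂ) (p β : ℝ) :
    ∫⁻ v in ball (0 : ℂ) 1, ENNReal.ofReal (‖f v‖ ^ p * (1 - ‖v‖) ^ β)
      ≤ ∫⁻ θ in Ioc 0 (2 * π), ∫⁻ r in Ioc (0 : ℝ) 1,
          ENNReal.ofReal (‖f (r * Complex.exp (θ * Complex.I))‖ ^ p * (1 - r) ^ β) := by
  refine (lintegral_ball_zero_one_le_lintegral_Ioc _).trans_eq
    (lintegral_congr fun θ => setLIntegral_congr_fun measurableSet_Ioc fun r hr => ?_)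
  simp [Complex.norm_exp_ofReal_mul_I, abs_of_pos hr.1]

theorem two_pi_mul_norm_le_lintegral_circleMap {f : ℂ → ℂ} {z : ℂ} {r : ℝ} (hr : 0 ≤ r)
    (hf : DifferentiableOn ℂ f (closedBall z r)) :
    ENNReal.ofReal (2 * π * ‖f z‖) ≤ ∫⁻ θ in Ioo (-π) π, ENNReal.ofReal ‖f (circleMap z r θ)‖ := by
  have hcont : Continuous fun θ => ‖f (circleMap z r θ)‖ :=
    (hf.continuousOn.comp_continuous (continuous_circleMap z r)
      fun θ => circleMap_mem_closedBall z hr θ).norm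
  have hmean : f z = (2 * π)⁻¹ • ∫ θ in (-π)..π, f (circleMap z r θ) := by
    rw [← (hf.diffContOnCl_ball (by rw [abs_of_nonneg hr])).circleAverage,
      Real.circleAverage_eq_integral_add (-π),
      intervalIntegral.integral_comp_add_right fun θ => f (circleMap z r θ)]
    norm_num [two_mul]
  have hle : 2 * π * ‖f z‖ ≤ ∫ θ in (-π)..π, ‖f (circleMap z r θ)‖ := by
    rw [hmean, norm_smul, norm_inv, Real.norm_of_nonneg (by positivity), ← mul_assoc,
      mul_inv_cancel₀ (by positivity), one_mul]
    exact intervalIntegral.norm_integral_le_integral_norm (by linarith [pi_pos])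
  rw [intervalIntegral.integral_of_le (by linarith [pi_pos])] at hle
  calc ENNReal.ofReal (2 * π * ‖f z‖) ≤ ENNReal.ofReal (∫ θ in Ioc (-π) π, ‖f (circleMap z r θ)‖) :=
        ENNReal.ofReal_le_ofReal hle
    _ = ∫⁻ θ in Ioo (-π) π, ENNReal.ofReal ‖f (circleMap z r θ)‖ := by
        rw [ofReal_integral_eq_lintegral_ofReal hcont.integrableOn_Ioc
          (.of_forall fun θ => norm_nonneg _), setLIntegral_congr Ioo_ae_eq_Ioc]

theorem pi_div_two_mul_sq_mul_norm_le_lintegral_ball {f : ℂ → ℂ} {z : ℂ} {ρ : ℝ} (hρ : 0 < ρ)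
    (hf : DifferentiableOn ℂ f (closedBall z ρ)) :
    ENNReal.ofReal (π / 2 * ρ ^ 2 * ‖f z‖) ≤ ∫⁻ w in ball z ρ, ENNReal.ofReal ‖f w‖ := by
  set F : ℝ × ℝ → ℝ≥0∞ := fun q => ENNReal.ofReal q.1 * ENNReal.ofReal ‖f (circleMap z q.1 q.2)‖
  have hmaps : MapsTo (fun q : ℝ × ℝ => circleMap z q.1 q.2) (Ioo (ρ / 2) ρ ×ˢ Ioo (-π) π)
      (closedBall z ρ) := by
    rintro ⟨r, θ⟩ ⟨hr, -⟩
    simp only [mem_closedBall, dist_eq_norm, circleMap_sub_center, norm_circleMap_zero]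
    exact (abs_of_pos (by linarith [hr.1])).trans_le hr.2.le
  have hF : AEMeasurable F (volume.restrict (Ioo (ρ / 2) ρ ×ˢ Ioo (-π) π)) :=
    (measurable_fst.ennreal_ofReal.aemeasurable).mul
      ((hf.continuousOn.comp circleMap.continuous.continuousOn hmaps).norm.aemeasurable
        (measurableSet_Ioo.prod measurableSet_Ioo)).ennreal_ofReal
  have hcircle : ∀ r ∈ Ioo (ρ / 2) ρ,
      ENNReal.ofReal (ρ / 2) * ENNReal.ofReal (2 * π * ‖f z‖) ≤ ∫⁻ θ in Ioo (-π) π, F (r, θ) := by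
    intro r hr
    rw [lintegral_const_mul' _ _ ENNReal.ofReal_ne_top]
    exact mul_le_mul' (ENNReal.ofReal_le_ofReal hr.1.le) (two_pi_mul_norm_le_lintegral_circleMap
      (by linarith [hr.1]) (hf.mono (closedBall_subset_closedBall hr.2.le)))
  calc ENNReal.ofReal (π / 2 * ρ ^ 2 * ‖f z‖)
      = ∫⁻ _ in Ioo (ρ / 2) ρ, ENNReal.ofReal (ρ / 2) * ENNReal.ofReal (2 * π * ‖f z‖) := by
        rw [setLIntegral_const, Real.volume_Ioo, ← ENNReal.ofReal_mul (by positivity),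
          ← ENNReal.ofReal_mul (by positivity)]
        ring_nf
    _ ≤ ∫⁻ r in Ioo (ρ / 2) ρ, ∫⁻ θ in Ioo (-π) π, F (r, θ) :=
        setLIntegral_mono' measurableSet_Ioo hcircle
    _ = ∫⁻ q in Ioo (ρ / 2) ρ ×ˢ Ioo (-π) π, F q := by
        rw [Measure.volume_eq_prod, setLIntegral_prod _ hF]
    _ ≤ ∫⁻ q in Ioo 0 ρ ×ˢ Ioo (-π) π, F q :=
        lintegral_mono_set (prod_mono (Ioo_subset_Ioo_left (by positivity)) subset_rfl)
    _ = ∫⁻ w in ball z ρ, ENNReal.ofReal ‖f w‖ :=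
        (lintegral_ball_eq_lintegral_polar (fun w => ENNReal.ofReal ‖f w‖) z ρ).symm

/-- The supremum `Q` of `(1 - t) ^ (2 / p) * M t` is finite and satisfies
`Q ≤ 2 ^ (2 * (1 - p) / p) * L * Q ^ (1 - p)`, which is solved for `Q ^ p`. -/
theorem rpow_le_of_sq_mul_le_rpow_midpoint {M : ℝ → ℝ} {p L : ℝ} (hp : 0 < p) (hp1 : p ≤ 1)
    (hL : 0 ≤ L) (hM : ∀ t ∈ Ico (0 : ℝ) 1, 0 ≤ M t) (hMbdd : BddAbove (M '' Ico 0 1))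
    (hrec : ∀ t ∈ Ico (0 : ℝ) 1, (1 - t) ^ 2 * M t ≤ L * M ((1 + t) / 2) ^ (1 - p)) :
    M 0 ^ p ≤ 2 ^ (2 * (1 - p) / p) * L := by
  set a := 2 * (1 - p) / p
  set Q := sSup ((fun t => (1 - t) ^ (2 / p) * M t) '' Ico 0 1)
  have hQbdd : BddAbove ((fun t => (1 - t) ^ (2 / p) * M t) '' Ico 0 1) := by
    obtain ⟨B, hB⟩ := hMbdd
    refine ⟨B, forall_mem_image.2 fun t ht => ?_⟩
    have hB' : M t ≤ B := hB (mem_image_of_mem M ht)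
    have hpow : (1 - t) ^ (2 / p) ≤ 1 :=
      rpow_le_one (by linarith [ht.2]) (by linarith [ht.1]) (by positivity)
    nlinarith [hM t ht, rpow_nonneg (sub_nonneg.2 ht.2.le) (2 / p)]
  have hle_Q : ∀ t ∈ Ico (0 : ℝ) 1, (1 - t) ^ (2 / p) * M t ≤ Q := fun t ht =>
    le_csSup hQbdd (mem_image_of_mem _ ht)
  have hM0Q : M 0 ≤ Q := by simpa using hle_Q 0 ⟨le_rfl, one_pos⟩
  have hQ : 0 ≤ Q := (hM 0 ⟨le_rfl, one_pos⟩).trans hM0Q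
  have hQrec : Q ≤ 2 ^ a * L * Q ^ (1 - p) := by
    refine csSup_le ⟨_, mem_image_of_mem _ (⟨le_rfl, one_pos⟩ : (0 : ℝ) ∈ Ico 0 1)⟩ ?_
    rintro _ ⟨t, ht, rfl⟩
    have ht1 : 0 < 1 - t := by linarith [ht.2]
    have hT : (1 + t) / 2 ∈ Ico (0 : ℝ) 1 := ⟨by linarith [ht.1], by linarith [ht.2]⟩
    have hMT : (1 - t) ^ a * M ((1 + t) / 2) ^ (1 - p) ≤ 2 ^ a * Q ^ (1 - p) := by
      have h := rpow_le_rpow (mul_nonneg (rpow_nonneg (by linarith [hT.2]) _) (hM _ hT))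
        (hle_Q _ hT) (by linarith : 0 ≤ 1 - p)
      rw [mul_rpow (rpow_nonneg (by linarith [hT.2]) _) (hM _ hT), ← rpow_mul (by linarith [hT.2]),
        show 1 - (1 + t) / 2 = (1 - t) / 2 by ring, div_rpow ht1.le zero_le_two,
        show 2 / p * (1 - p) = a by ring, div_mul_eq_mul_div, div_le_iff₀ (by positivity)] at h
      linarith
    calc (1 - t) ^ (2 / p) * M t = (1 - t) ^ a * ((1 - t) ^ 2 * M t) := by
          rw [← mul_assoc, ← rpow_natCast, ← rpow_add ht1]
          congr 2
          simp only [a]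
          field_simp
          ring
      _ ≤ (1 - t) ^ a * (L * M ((1 + t) / 2) ^ (1 - p)) :=
          mul_le_mul_of_nonneg_left (hrec t ht) (rpow_nonneg ht1.le a)
      _ = L * ((1 - t) ^ a * M ((1 + t) / 2) ^ (1 - p)) := by ring
      _ ≤ L * (2 ^ a * Q ^ (1 - p)) := mul_le_mul_of_nonneg_left hMT hL
      _ = 2 ^ a * L * Q ^ (1 - p) := by ring
  have hQp : Q ^ p ≤ 2 ^ a * L := by
    rcases hQ.eq_or_lt with hQ0 | hQpos
    · rw [← hQ0, zero_rpow hp.ne']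
      positivity
    · have hsplit : Q = Q ^ p * Q ^ (1 - p) := by
        rw [← rpow_add hQpos, add_sub_cancel, rpow_one]
      nth_rewrite 1 [hsplit] at hQrec
      exact le_of_mul_le_mul_right hQrec (rpow_pos_of_pos hQpos _)
  exact (rpow_le_rpow (hM 0 ⟨le_rfl, one_pos⟩) hM0Q hp.le).trans hQp

theorem pi_div_two_mul_sq_mul_norm_le_rpow_mul_lintegral_ball {f : ℂ → ℂ} {w : ℂ} {ρ p m : ℝ}
    (hρ : 0 < ρ) (hp1 : p ≤ 1) (hf : DifferentiableOn ℂ f (closedBall w ρ))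
    (hm : ∀ v ∈ ball w ρ, ‖f v‖ ≤ m) :
    ENNReal.ofReal (π / 2 * ρ ^ 2 * ‖f w‖)
      ≤ ENNReal.ofReal (m ^ (1 - p)) * ∫⁻ v in ball w ρ, ENNReal.ofReal (‖f v‖ ^ p) := by
  refine (pi_div_two_mul_sq_mul_norm_le_lintegral_ball hρ hf).trans ?_
  rw [← lintegral_const_mul' _ _ ENNReal.ofReal_ne_top]
  refine setLIntegral_mono' measurableSet_ball fun v hv => ?_
  have hm0 : 0 ≤ m := (norm_nonneg _).trans (hm v hv)
  rw [← ENNReal.ofReal_mul (rpow_nonneg hm0 _)]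
  refine ENNReal.ofReal_le_ofReal ?_
  calc ‖f v‖ = ‖f v‖ ^ (1 - p) * ‖f v‖ ^ p := by
        rw [← rpow_add' (norm_nonneg _) (by simp), sub_add_cancel, rpow_one]
    _ ≤ m ^ (1 - p) * ‖f v‖ ^ p := mul_le_mul_of_nonneg_right
        (rpow_le_rpow (norm_nonneg _) (hm v hv) (by linarith)) (rpow_nonneg (norm_nonneg _) _)

theorem one_sub_sq_mul_norm_le_mul_toReal_lintegral_ball {f : ℂ → ℂ} {z w : ℂ} {Δ p t m : ℝ}
    (hp1 : p ≤ 1) (hΔ : 0 < Δ) (ht : t ∈ Ico (0 : ℝ) 1) (hw : w ∈ closedBall z (t * Δ))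
    (hf : DifferentiableOn ℂ f (closedBall z Δ))
    (hm : ∀ v ∈ closedBall z ((1 + t) / 2 * Δ), ‖f v‖ ≤ m)
    (hI : ∫⁻ v in ball z Δ, ENNReal.ofReal (‖f v‖ ^ p) ≠ ⊤) :
    (1 - t) ^ 2 * ‖f w‖
      ≤ 8 / (π * Δ ^ 2) * (∫⁻ v in ball z Δ, ENNReal.ofReal (‖f v‖ ^ p)).toReal * m ^ (1 - p) := by
  set I := ∫⁻ v in ball z Δ, ENNReal.ofReal (‖f v‖ ^ p)
  rw [mem_closedBall] at hw
  have hρ : 0 < (1 - t) * Δ / 2 := by nlinarith [ht.2]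
  have hball : closedBall w ((1 - t) * Δ / 2) ⊆ closedBall z ((1 + t) / 2 * Δ) :=
    closedBall_subset_closedBall' (by linarith)
  have hm0 : 0 ≤ m := (norm_nonneg _).trans (hm w (hball (mem_closedBall_self hρ.le)))
  have hmvp := pi_div_two_mul_sq_mul_norm_le_rpow_mul_lintegral_ball hρ hp1
    (hf.mono (hball.trans (closedBall_subset_closedBall (by nlinarith [ht.2]))))
    (fun v hv => hm v (hball (ball_subset_closedBall hv)))
  have hsub : ∫⁻ v in ball w ((1 - t) * Δ / 2), ENNReal.ofReal (‖f v‖ ^ p) ≤ I :=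
    lintegral_mono_set (ball_subset_ball' (by linarith))
  have hreal : π / 2 * ((1 - t) * Δ / 2) ^ 2 * ‖f w‖ ≤ m ^ (1 - p) * I.toReal := by
    rw [← ENNReal.ofReal_le_ofReal_iff (by positivity),
      ENNReal.ofReal_mul (rpow_nonneg hm0 _), ENNReal.ofReal_toReal hI]
    exact hmvp.trans (mul_le_mul' le_rfl hsub)
  calc (1 - t) ^ 2 * ‖f w‖ = 8 / (π * Δ ^ 2) * (π / 2 * ((1 - t) * Δ / 2) ^ 2 * ‖f w‖) := by
        field_simp
        ring
    _ ≤ 8 / (π * Δ ^ 2) * (m ^ (1 - p) * I.toReal) := by gcongr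
    _ = 8 / (π * Δ ^ 2) * I.toReal * m ^ (1 - p) := by ring

theorem norm_rpow_mul_sq_le_lintegral_ball_of_le_one {f : ℂ → ℂ} {z : ℂ} {Δ p : ℝ} (hp : 0 < p)
    (hp1 : p ≤ 1) (hΔ : 0 < Δ) (hf : DifferentiableOn ℂ f (closedBall z Δ)) :
    ENNReal.ofReal (‖f z‖ ^ p * Δ ^ 2)
      ≤ ENNReal.ofReal (8 * 2 ^ (2 * (1 - p) / p) / π) *
        ∫⁻ w in ball z Δ, ENNReal.ofReal (‖f w‖ ^ p) := by
  set I := ∫⁻ w in ball z Δ, ENNReal.ofReal (‖f w‖ ^ p)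
  have hC : 0 < 8 * (2 : ℝ) ^ (2 * (1 - p) / p) / π := by positivity
  rcases eq_or_ne I ⊤ with hI | hI
  · rw [hI, ENNReal.mul_top (ENNReal.ofReal_pos.2 hC).ne']
    exact le_top
  obtain ⟨B, hB⟩ := (isCompact_closedBall z Δ).exists_bound_of_continuousOn hf.continuousOn
  set M : ℝ → ℝ := fun t => sSup ((fun w => ‖f w‖) '' closedBall z (t * Δ))
  have hsub : ∀ t ∈ Ico (0 : ℝ) 1, closedBall z (t * Δ) ⊆ closedBall z Δ := fun t ht =>
    closedBall_subset_closedBall (by nlinarith [ht.2])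
  have hcenter : ∀ t ∈ Ico (0 : ℝ) 1, z ∈ closedBall z (t * Δ) := fun t ht =>
    mem_closedBall_self (by nlinarith [ht.1])
  have hle_M : ∀ t ∈ Ico (0 : ℝ) 1, ∀ w ∈ closedBall z (t * Δ), ‖f w‖ ≤ M t := fun t ht w hw =>
    le_csSup ⟨B, forall_mem_image.2 fun v hv => hB v (hsub t ht hv)⟩ (mem_image_of_mem _ hw)
  have hM_le : ∀ t ∈ Ico (0 : ℝ) 1, ∀ b, (∀ w ∈ closedBall z (t * Δ), ‖f w‖ ≤ b) → M t ≤ b :=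
    fun t ht b hb => csSup_le ((nonempty_of_mem (hcenter t ht)).image _) (forall_mem_image.2 hb)
  have hM0 : ∀ t ∈ Ico (0 : ℝ) 1, 0 ≤ M t := fun t ht =>
    (norm_nonneg _).trans (hle_M t ht z (hcenter t ht))
  have hrec : ∀ t ∈ Ico (0 : ℝ) 1,
      (1 - t) ^ 2 * M t ≤ 8 / (π * Δ ^ 2) * I.toReal * M ((1 + t) / 2) ^ (1 - p) := by
    intro t ht
    have hT : (1 + t) / 2 ∈ Ico (0 : ℝ) 1 := ⟨by linarith [ht.1], by linarith [ht.2]⟩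
    have ht1 : 0 < (1 - t) ^ 2 := by nlinarith [ht.2]
    rw [← le_div_iff₀' ht1]
    refine hM_le t ht _ fun w hw => ?_
    rw [le_div_iff₀' ht1]
    exact one_sub_sq_mul_norm_le_mul_toReal_lintegral_ball hp1 hΔ ht hw hf (hle_M _ hT) hI
  have hM0_le := rpow_le_of_sq_mul_le_rpow_midpoint hp hp1 (by positivity) hM0
    ⟨B, forall_mem_image.2 fun t ht => hM_le t ht B fun w hw => hB w (hsub t ht hw)⟩ hrec
  have hfz : ‖f z‖ ^ p ≤ M 0 ^ p := rpow_le_rpow (norm_nonneg _)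
    (hle_M 0 ⟨le_rfl, one_pos⟩ z (hcenter 0 ⟨le_rfl, one_pos⟩)) hp.le
  have hreal : ‖f z‖ ^ p * Δ ^ 2 ≤ 8 * 2 ^ (2 * (1 - p) / p) / π * I.toReal := by
    calc ‖f z‖ ^ p * Δ ^ 2 ≤ 2 ^ (2 * (1 - p) / p) * (8 / (π * Δ ^ 2) * I.toReal) * Δ ^ 2 := by
          gcongr
          exact hfz.trans hM0_le
      _ = 8 * 2 ^ (2 * (1 - p) / p) / π * I.toReal := by field_simp
  calc ENNReal.ofReal (‖f z‖ ^ p * Δ ^ 2)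
      ≤ ENNReal.ofReal (8 * 2 ^ (2 * (1 - p) / p) / π * I.toReal) := ENNReal.ofReal_le_ofReal hreal
    _ = ENNReal.ofReal (8 * 2 ^ (2 * (1 - p) / p) / π) * I := by
        rw [ENNReal.ofReal_mul hC.le, ENNReal.ofReal_toReal hI]

theorem norm_rpow_mul_sq_le_lintegral_ball_of_one_le {f : ℂ → ℂ} {z : ℂ} {Δ p : ℝ} (hp1 : 1 ≤ p)
    (hΔ : 0 < Δ) (hf : DifferentiableOn ℂ f (closedBall z Δ)) :
    ENNReal.ofReal (‖f z‖ ^ p * Δ ^ 2)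
      ≤ ENNReal.ofReal (2 ^ p / π) * ∫⁻ w in ball z Δ, ENNReal.ofReal (‖f w‖ ^ p) := by
  have hp : 0 < p := zero_lt_one.trans_le hp1
  have hvol : volume (ball z Δ) = ENNReal.ofReal (π * Δ ^ 2) := by
    rw [Complex.volume_ball, ← ENNReal.ofReal_pow hΔ.le, ← NNReal.coe_real_pi,
      ENNReal.ofReal_coe_nnreal.symm, ← ENNReal.ofReal_mul (by positivity), mul_comm]
  have hmeas : AEStronglyMeasurable (fun w => ENNReal.ofReal ‖f w‖) (volume.restrict (ball z Δ)) :=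
    ((hf.continuousOn.mono ball_subset_closedBall).norm.aemeasurable
      measurableSet_ball).ennreal_ofReal.aestronglyMeasurable
  have hholder := eLpNorm'_le_eLpNorm'_mul_rpow_measure_univ one_pos hp1 hmeas
  simp only [eLpNorm'_eq_lintegral_enorm, enorm_eq_self, ENNReal.rpow_one, div_one,
    Measure.restrict_apply_univ, hvol] at hholder
  have h := ENNReal.rpow_le_rpow
    ((pi_div_two_mul_sq_mul_norm_le_lintegral_ball hΔ hf).trans hholder) hp.le
  rw [ENNReal.mul_rpow_of_nonneg _ _ hp.le, ← ENNReal.rpow_mul, ← ENNReal.rpow_mul,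
    one_div_mul_cancel hp.ne', ENNReal.rpow_one, show (1 - 1 / p) * p = p - 1 by field_simp,
    ENNReal.ofReal_rpow_of_nonneg (by positivity) hp.le,
    ENNReal.ofReal_rpow_of_nonneg (by positivity) (by linarith)] at h
  have hrpow : ∀ w, ENNReal.ofReal ‖f w‖ ^ p = ENNReal.ofReal (‖f w‖ ^ p) := fun w =>
    ENNReal.ofReal_rpow_of_nonneg (norm_nonneg _) hp.le
  simp only [hrpow] at h
  have hpi := pi_pos
  have hscale : ‖f z‖ ^ p * Δ ^ 2
      = 2 ^ p / π / (π * Δ ^ 2) ^ (p - 1) * (π / 2 * Δ ^ 2 * ‖f z‖) ^ p := by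
    rw [mul_rpow (by positivity) (norm_nonneg _), mul_rpow (by positivity) (by positivity),
      mul_rpow (by positivity) (by positivity), div_rpow (by positivity) (by positivity),
      rpow_sub_one (by positivity), rpow_sub_one (by positivity)]
    field_simp
  calc ENNReal.ofReal (‖f z‖ ^ p * Δ ^ 2)
      = ENNReal.ofReal (2 ^ p / π / (π * Δ ^ 2) ^ (p - 1))
          * ENNReal.ofReal ((π / 2 * Δ ^ 2 * ‖f z‖) ^ p) := by
        rw [hscale, ENNReal.ofReal_mul (by positivity)]
    _ ≤ ENNReal.ofReal (2 ^ p / π / (π * Δ ^ 2) ^ (p - 1))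
          * ((∫⁻ w in ball z Δ, ENNReal.ofReal (‖f w‖ ^ p))
            * ENNReal.ofReal ((π * Δ ^ 2) ^ (p - 1))) :=
        mul_le_mul' le_rfl h
    _ = ENNReal.ofReal (2 ^ p / π) * ∫⁻ w in ball z Δ, ENNReal.ofReal (‖f w‖ ^ p) := by
        rw [mul_comm (lintegral _ _), ← mul_assoc, ← ENNReal.ofReal_mul (by positivity),
          div_mul_cancel₀ _ (by positivity)]

theorem exists_norm_rpow_mul_sq_le_lintegral_ball {p : ℝ} (hp : 0 < p) :
    ∃ C > 0, ∀ (f : ℂ → ℂ) (z : ℂ) (Δ : ℝ), 0 < Δ → DifferentiableOn ℂ f (closedBall z Δ) →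
      ENNReal.ofReal (‖f z‖ ^ p * Δ ^ 2)
        ≤ ENNReal.ofReal C * ∫⁻ w in ball z Δ, ENNReal.ofReal (‖f w‖ ^ p) := by
  rcases le_total p 1 with hp1 | hp1
  · exact ⟨_, by positivity, fun f z Δ hΔ hf =>
      norm_rpow_mul_sq_le_lintegral_ball_of_le_one hp hp1 hΔ hf⟩
  · exact ⟨_, by positivity, fun f z Δ hΔ hf =>
      norm_rpow_mul_sq_le_lintegral_ball_of_one_le hp1 hΔ hf⟩

theorem rpow_le_max_one_rpow_mul_rpow {x δ c e : ℝ} (hδ : 0 < δ) (hδx : δ ≤ x)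
    (hxc : x ≤ c * δ) : x ^ e ≤ max 1 (c ^ e) * δ ^ e := by
  rcases le_total 0 e with he | he
  · have hc : 0 ≤ c := nonneg_of_mul_nonneg_left (hδ.le.trans (hδx.trans hxc)) hδ
    calc x ^ e ≤ (c * δ) ^ e := rpow_le_rpow (hδ.le.trans hδx) hxc he
      _ = c ^ e * δ ^ e := mul_rpow hc hδ.le
      _ ≤ max 1 (c ^ e) * δ ^ e := by gcongr; exact le_max_right _ _
  · calc x ^ e ≤ δ ^ e := rpow_le_rpow_of_nonpos hδ hδx he
      _ ≤ max 1 (c ^ e) * δ ^ e :=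
        le_mul_of_one_le_left (rpow_nonneg hδ.le _) (le_max_left _ _)

theorem lintegral_ball_le_mul_lintegral_weighted (f : ℂ → ℂ) (p γ : ℝ) {w : ℂ}
    (hw : w ∈ ball (0 : ℂ) 1) :
    ∫⁻ v in ball w ((1 - ‖w‖) / 2), ENNReal.ofReal (‖f v‖ ^ p)
      ≤ ENNReal.ofReal (max 1 (3 ^ (1 - γ)) * ((1 - ‖w‖) / 2) ^ (1 - γ))
        * ∫⁻ v in ball (0 : ℂ) 1, ENNReal.ofReal (‖f v‖ ^ p * (1 - ‖v‖) ^ (γ - 1)) := by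
  rw [mem_ball_zero_iff] at hw
  set δ := (1 - ‖w‖) / 2
  have hδ : 0 < δ := by simp only [δ]; linarith
  have hsub : ball w δ ⊆ ball 0 1 := ball_subset_ball' (by simp only [δ, dist_zero_right]; linarith)
  rw [← lintegral_const_mul' _ _ ENNReal.ofReal_ne_top]
  refine (setLIntegral_mono' measurableSet_ball fun v hv => ?_).trans (lintegral_mono_set hsub)
  rw [mem_ball, dist_eq_norm] at hv
  have hnorm := abs_norm_sub_norm_le v w
  obtain ⟨hlow, hhigh⟩ := abs_lt.1 (hnorm.trans_lt hv)
  have hlow' : δ ≤ 1 - ‖v‖ := by simp only [δ] at hhigh ⊢; linarith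
  have hhigh' : 1 - ‖v‖ ≤ 3 * δ := by simp only [δ] at hlow ⊢; linarith
  have hweight := rpow_le_max_one_rpow_mul_rpow (e := 1 - γ) hδ hlow' hhigh'
  have hv1 : 0 ≤ 1 - ‖v‖ := hδ.le.trans hlow'
  rw [← ENNReal.ofReal_mul (by positivity)]
  refine ENNReal.ofReal_le_ofReal ?_
  calc ‖f v‖ ^ p = ‖f v‖ ^ p * (1 - ‖v‖) ^ (γ - 1) * (1 - ‖v‖) ^ (1 - γ) := by
        rw [mul_assoc, ← rpow_add (hδ.trans_le hlow'), sub_add_sub_cancel, sub_self, rpow_zero,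
          mul_one]
    _ ≤ ‖f v‖ ^ p * (1 - ‖v‖) ^ (γ - 1) * (max 1 (3 ^ (1 - γ)) * δ ^ (1 - γ)) := by
        gcongr
    _ = _ := mul_comm _ _

theorem exists_norm_rpow_mul_one_sub_norm_rpow_le {p : ℝ} (hp : 0 < p) (γ : ℝ) :
    ∃ C > 0, ∀ f : ℂ → ℂ, DifferentiableOn ℂ f (ball 0 1) → ∀ w ∈ ball (0 : ℂ) 1,
      ENNReal.ofReal (‖f w‖ ^ p * (1 - ‖w‖) ^ (γ + 1))
        ≤ ENNReal.ofReal C *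
          ∫⁻ v in ball (0 : ℂ) 1, ENNReal.ofReal (‖f v‖ ^ p * (1 - ‖v‖) ^ (γ - 1)) := by
  obtain ⟨C₀, hC₀, hsmv⟩ := exists_norm_rpow_mul_sq_le_lintegral_ball hp
  set m := max 1 ((3 : ℝ) ^ (1 - γ))
  have hm : 0 < m := lt_max_of_lt_left one_pos
  refine ⟨2 ^ (γ + 1) * C₀ * m, by positivity, fun f hf w hw => ?_⟩
  have hw1 := mem_ball_zero_iff.1 hw
  set δ := (1 - ‖w‖) / 2
  have hδ : 0 < δ := by simp only [δ]; linarith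
  have hsub : closedBall w δ ⊆ ball 0 1 :=
    closedBall_subset_ball' (by simp only [δ, dist_zero_right]; linarith)
  have hsplit : ‖f w‖ ^ p * (1 - ‖w‖) ^ (γ + 1)
      = 2 ^ (γ + 1) * δ ^ (γ - 1) * (‖f w‖ ^ p * δ ^ 2) := by
    rw [show 1 - ‖w‖ = 2 * δ by simp only [δ]; ring, mul_rpow zero_le_two hδ.le,
      show γ + 1 = γ - 1 + (2 : ℕ) by push_cast; ring, rpow_add hδ, rpow_natCast]
    ring
  have hcancel : δ ^ (γ - 1) * δ ^ (1 - γ) = 1 := by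
    rw [← rpow_add hδ, sub_add_sub_cancel, sub_self, rpow_zero]
  calc ENNReal.ofReal (‖f w‖ ^ p * (1 - ‖w‖) ^ (γ + 1))
      = ENNReal.ofReal (2 ^ (γ + 1) * δ ^ (γ - 1)) * ENNReal.ofReal (‖f w‖ ^ p * δ ^ 2) := by
        rw [hsplit, ENNReal.ofReal_mul (by positivity)]
    _ ≤ ENNReal.ofReal (2 ^ (γ + 1) * δ ^ (γ - 1)) * (ENNReal.ofReal C₀ *
          (ENNReal.ofReal (m * δ ^ (1 - γ)) *
            ∫⁻ v in ball (0 : ℂ) 1, ENNReal.ofReal (‖f v‖ ^ p * (1 - ‖v‖) ^ (γ - 1)))) := by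
        gcongr
        exact (hsmv f w δ hδ (hf.mono hsub)).trans
          (mul_le_mul' le_rfl (lintegral_ball_le_mul_lintegral_weighted f p γ hw))
    _ = ENNReal.ofReal (2 ^ (γ + 1) * C₀ * m) *
          ∫⁻ v in ball (0 : ℂ) 1, ENNReal.ofReal (‖f v‖ ^ p * (1 - ‖v‖) ^ (γ - 1)) := by
        rw [← mul_assoc, ← mul_assoc, ← ENNReal.ofReal_mul (by positivity),
          ← ENNReal.ofReal_mul (by positivity)]
        congr 2
        linear_combination (2 ^ (γ + 1) * C₀ * m) * hcancel

theorem rpow_mul_rpow_eq_rpow_mul {a b p s γ : ℝ} (ha : 0 ≤ a) (hb : 0 < b) (hp : 0 < p)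
    (hs : 0 < s) :
    a ^ s * b ^ (s / p * (γ + 1) - 2)
      = (a ^ p * b ^ (γ + 1)) ^ (s / p - 1) * (a ^ p * b ^ (γ - 1)) := by
  have hexp : p * (s / p - 1) + p = s := by field_simp; ring
  calc a ^ s * b ^ (s / p * (γ + 1) - 2)
      = a ^ (p * (s / p - 1) + p) * b ^ ((γ + 1) * (s / p - 1) + (γ - 1)) := by
        rw [hexp]
        ring_nf
    _ = _ := by
        rw [rpow_add' ha (by rw [hexp]; exact hs.ne'), rpow_add hb,
          mul_rpow (rpow_nonneg ha _) (rpow_nonneg hb.le _), ← rpow_mul ha, ← rpow_mul hb.le]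
        ring

theorem exists_lintegral_weighted_le_rpow {p s : ℝ} (hp : 0 < p) (hps : p ≤ s) (γ : ℝ) :
    ∃ C > 0, ∀ f : ℂ → ℂ, DifferentiableOn ℂ f (ball 0 1) →
      ∫⁻ w in ball (0 : ℂ) 1, ENNReal.ofReal (‖f w‖ ^ s * (1 - ‖w‖) ^ (s / p * (γ + 1) - 2))
        ≤ ENNReal.ofReal C * (∫⁻ w in ball (0 : ℂ) 1,
            ENNReal.ofReal (‖f w‖ ^ p * (1 - ‖w‖) ^ (γ - 1))) ^ (s / p) := by
  obtain ⟨C, hC, hpointwise⟩ := exists_norm_rpow_mul_one_sub_norm_rpow_le hp γ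
  have he : 0 ≤ s / p - 1 := by rw [sub_nonneg, one_le_div hp]; exact hps
  refine ⟨C ^ (s / p - 1), by positivity, fun f hf => ?_⟩
  set A := ∫⁻ w in ball (0 : ℂ) 1, ENNReal.ofReal (‖f w‖ ^ p * (1 - ‖w‖) ^ (γ - 1))
  rcases eq_or_ne A ⊤ with hA | hA
  · rw [hA, ENNReal.top_rpow_of_pos (div_pos (hp.trans_le hps) hp),
      ENNReal.mul_top (ENNReal.ofReal_pos.2 (by positivity)).ne']
    exact le_top
  have hsplit : ∀ w ∈ ball (0 : ℂ) 1,
      ENNReal.ofReal (‖f w‖ ^ s * (1 - ‖w‖) ^ (s / p * (γ + 1) - 2))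
        = ENNReal.ofReal (‖f w‖ ^ p * (1 - ‖w‖) ^ (γ + 1)) ^ (s / p - 1)
          * ENNReal.ofReal (‖f w‖ ^ p * (1 - ‖w‖) ^ (γ - 1)) := by
    intro w hw
    have hw1 : 0 < 1 - ‖w‖ := by linarith [mem_ball_zero_iff.1 hw]
    rw [rpow_mul_rpow_eq_rpow_mul (norm_nonneg _) hw1 hp (hp.trans_le hps),
      ENNReal.ofReal_mul (by positivity), ENNReal.ofReal_rpow_of_nonneg (by positivity) he]
  calc ∫⁻ w in ball (0 : ℂ) 1, ENNReal.ofReal (‖f w‖ ^ s * (1 - ‖w‖) ^ (s / p * (γ + 1) - 2))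
      ≤ ∫⁻ w in ball (0 : ℂ) 1, (ENNReal.ofReal C * A) ^ (s / p - 1)
          * ENNReal.ofReal (‖f w‖ ^ p * (1 - ‖w‖) ^ (γ - 1)) := by
        refine setLIntegral_mono' measurableSet_ball fun w hw => ?_
        rw [hsplit w hw]
        gcongr
        exact hpointwise f hf w hw
    _ = ENNReal.ofReal (C ^ (s / p - 1)) * (A ^ (s / p - 1) * A) := by
        rw [lintegral_const_mul' _ _ (by finiteness), ENNReal.mul_rpow_of_nonneg _ _ he,
          ENNReal.ofReal_rpow_of_nonneg hC.le he, mul_assoc]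
    _ = ENNReal.ofReal (C ^ (s / p - 1)) * A ^ (s / p) := by
        congr 1
        calc A ^ (s / p - 1) * A = A ^ (s / p - 1) * A ^ (1 : ℝ) := by rw [ENNReal.rpow_one]
          _ = A ^ (s / p) := by
            rw [← ENNReal.rpow_add_of_nonneg _ _ he zero_le_one, sub_add_cancel]

theorem bergman_embedding_Fpq_general (p s α : ℝ) (hp : 0 < p) (hps : p ≤ s) :
    ∃ c : ℝ, 0 < c ∧ ∀ f : ℂ → ℂ, AnalyticOn ℂ f (ball 0 1) →
      (ENNReal.ofReal (Real.pi)⁻¹ *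
        ∫⁻ w in ball (0 : ℂ) 1,
          ENNReal.ofReal (‖f w‖ ^ s * (1 - ‖w‖) ^ (s * (α + 1 / p) - 2))) ^ (1 / s)
      ≤ ENNReal.ofReal c *
        ((ENNReal.ofReal (2 * Real.pi))⁻¹ *
          ∫⁻ θ in Set.Ioc (0 : ℝ) (2 * Real.pi),
            ∫⁻ r in Set.Ioc (0 : ℝ) 1,
              ENNReal.ofReal (‖f ((r : ℂ) * Complex.exp (θ * Complex.I))‖ ^ p
                * (1 - r) ^ (α * p - 1))) ^ (1 / p) := by
  obtain ⟨C, hC, hembed⟩ := exists_lintegral_weighted_le_rpow hp hps (α * p)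
  have hs : 0 < s := hp.trans_le hps
  refine ⟨(C / π) ^ (1 / s) * (2 * π) ^ (1 / p), by positivity, fun f hf => ?_⟩
  set F := ∫⁻ θ in Ioc (0 : ℝ) (2 * π), ∫⁻ r in Ioc (0 : ℝ) 1,
    ENNReal.ofReal (‖f ((r : ℂ) * Complex.exp (θ * Complex.I))‖ ^ p * (1 - r) ^ (α * p - 1))
  have hbound : ∫⁻ w in ball (0 : ℂ) 1,
      ENNReal.ofReal (‖f w‖ ^ s * (1 - ‖w‖) ^ (s * (α + 1 / p) - 2))
        ≤ ENNReal.ofReal C * F ^ (s / p) := by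
    rw [show s * (α + 1 / p) = s / p * (α * p + 1) by field_simp]
    exact (hembed f hf.differentiableOn).trans
      (by gcongr; exact lintegral_ball_weighted_le_lintegral_Ioc f p _)
  have hF : F ^ (1 / p)
      = ENNReal.ofReal ((2 * π) ^ (1 / p)) * ((ENNReal.ofReal (2 * π))⁻¹ * F) ^ (1 / p) := by
    rw [← ENNReal.ofReal_rpow_of_nonneg (by positivity) (by positivity),
      ← ENNReal.mul_rpow_of_nonneg _ _ (by positivity), ← mul_assoc,
      ENNReal.mul_inv_cancel (by positivity) ENNReal.ofReal_ne_top, one_mul]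
  calc (ENNReal.ofReal π⁻¹ * ∫⁻ w in ball (0 : ℂ) 1,
        ENNReal.ofReal (‖f w‖ ^ s * (1 - ‖w‖) ^ (s * (α + 1 / p) - 2))) ^ (1 / s)
      ≤ (ENNReal.ofReal π⁻¹ * (ENNReal.ofReal C * F ^ (s / p))) ^ (1 / s) := by gcongr
    _ = ENNReal.ofReal ((C / π) ^ (1 / s)) * F ^ (1 / p) := by
        rw [← mul_assoc, ← ENNReal.ofReal_mul (by positivity), inv_mul_eq_div,
          ENNReal.mul_rpow_of_nonneg _ _ (by positivity), ← ENNReal.rpow_mul,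
          ENNReal.ofReal_rpow_of_nonneg (by positivity) (by positivity)]
        congr 2
        field_simp
    _ = _ := by rw [hF, ← mul_assoc, ← ENNReal.ofReal_mul (by positivity)]

/-- Lemma 2 (dimension one, `p = q`): the weighted Bergman-type norm with weight
`(1-|w|)^{s(α+1/p)-2}` is dominated by the `F^{p,p}_α` norm. -/
theorem bergman_embedding_Fpq (p s α : ℝ) (hp : 0 < p) (hps : p ≤ s) (hα : 0 < α) :
    ∃ c : ℝ, 0 < c ∧ ∀ f : ℂ → ℂ, AnalyticOn ℂ f (ball 0 1) →
      (ENNReal.ofReal (Real.pi)⁻¹ *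
        ∫⁻ w in ball (0 : ℂ) 1,
          ENNReal.ofReal (‖f w‖ ^ s * (1 - ‖w‖) ^ (s * (α + 1 / p) - 2))) ^ (1 / s)
      ≤ ENNReal.ofReal c *
        ((ENNReal.ofReal (2 * Real.pi))⁻¹ *
          ∫⁻ θ in Set.Ioc (0 : ℝ) (2 * Real.pi),
            ∫⁻ r in Set.Ioc (0 : ℝ) 1,
              ENNReal.ofReal (‖f ((r : ℂ) * Complex.exp (θ * Complex.I))‖ ^ p
                * (1 - r) ^ (α * p - 1))) ^ (1 / p) :=
  bergman_embedding_Fpq_general p s α hp hps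
end
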